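/- Let P=(a,b,c) ∈ ℝ³ with P ≠ (0,0,0), and set r = √(a²+b²+(c−ab/2)²). Then r > 0, the vector (u,v,w) = (a/r, b/r, (c−ab/2)/r) is a Euclidean unit vector, and the translation curve γ(t) = (u t, v t, (1/2)u v t² + w t) satisfies γ(r) = (a,b,c). (Hence the translation distance in Nil from the origin to (a,b,c) equals √(a²+b²+(c−ab/2)²).) -/

import Mathlib

noncomputable section

open Real

/-- The Nil translation curve starting at the origin with initial velocity `(u,v,w)`. -/
def nilCurve (u v w : ℝ) (t : ℝ) : ℝ × ℝ × ℝ :=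
  (u * t, v * t, u * v * t ^ 2 / 2 + w * t)

/-- For any point `(a,b,c) ≠ (0,0,0)`, setting `r = √(a²+b²+(c-ab/2)²)`, we have `r > 0`,
the vector `(a/r, b/r, (c-ab/2)/r)` is a Euclidean unit vector, and the translation curve
with this initial velocity reaches `(a,b,c)` at parameter `r`; hence the translation
distance from the origin to `(a,b,c)` is `√(a²+b²+(c-ab/2)²)`. -/
theorem nil_translation_distance_from_origin (a b c : ℝ) (h : (a, b, c) ≠ ((0 : ℝ), (0 : ℝ), (0 : ℝ))) :
    letI r : ℝ := Real.sqrt (a ^ 2 + b ^ 2 + (c - a * b / 2) ^ 2)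
    0 < r ∧
      (a / r) ^ 2 + (b / r) ^ 2 + ((c - a * b / 2) / r) ^ 2 = 1 ∧
      nilCurve (a / r) (b / r) ((c - a * b / 2) / r) r = (a, b, c) := by
  set S : ℝ := a ^ 2 + b ^ 2 + (c - a * b / 2) ^ 2 with hS
  have hSpos : 0 < S := by
    rcases lt_or_eq_of_le (by positivity : (0:ℝ) ≤ S) with h1 | h1
    · exact h1
    · exfalso
      rw [hS] at h1
      have ha : a = 0 := by nlinarith [sq_nonneg a, sq_nonneg b, sq_nonneg (c - a*b/2)]
      have hb : b = 0 := by nlinarith [sq_nonneg a, sq_nonneg b, sq_nonneg (c - a*b/2)]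
      have hc : c = 0 := by rw [ha, hb] at h1; nlinarith
      exact h (by simp [ha, hb, hc])
  have hr : 0 < Real.sqrt S := Real.sqrt_pos.mpr hSpos
  have hrne : Real.sqrt S ≠ 0 := ne_of_gt hr
  have hsq : Real.sqrt S ^ 2 = S := Real.sq_sqrt hSpos.le
  refine ⟨hr, ?_, ?_⟩
  · rw [div_pow, div_pow, div_pow, hsq, ← add_div, ← add_div, ← hS,
      div_self hSpos.ne']
  · unfold nilCurve
    have h2 : Real.sqrt S * Real.sqrt S = S := by nlinarith [hsq]
    refine Prod.ext ?_ (Prod.ext ?_ ?_)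
    · field_simp
    · field_simp
    · have h2' : Real.sqrt S * Real.sqrt S = a ^ 2 + b ^ 2 + (c - a * b / 2) ^ 2 := by
        rw [h2, hS]
      field_simp
      nlinarith [h2']
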